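/- Let n ∈ ℕ, q ∈ ℂ[z] with deg q ≤ 2n+1, and c ∈ ℂ, and set P(z) := q(z²) + c·z^{2n+1}. Assume (z−1)^{2n+2} divides P, and that the constant coefficient of P and the coefficient of z^{4n+2} in P are both nonzero. Define F : ℂ² → ℂ by F(x,y) := Σ_{j=0}^{2n+1} (coeff of z^j in q)·x^j·y^{2n+1−j} + c·|xy|^{(2n+1)/2}. For p ∈ ℂ and t ∈ ℂ \ {0}, let e_t(p) := sSup{γ ≥ 0 : ∃ r > 0 with ∫_{B(p,r)} |F(x, t/x)|^{−2γ} dλ(x) < ∞}, and let e₀ := min( sSup{γ ≥ 0 : ∃ r > 0 with ∫_{B(0,r)} |F(x,0)|^{−2γ} dλ(x) < ∞}, sSup{γ ≥ 0 : ∃ r > 0 with ∫_{B(0,r)} |F(0,y)|^{−2γ} dλ(y) < ∞} ). Then for every real s > 0, with t := s², one has e_t(s) ≤ 1/(2n+2) < 1/(2n+1) = e₀. -/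

import Mathlib

open MeasureTheory Polynomial
open scoped ENNReal

/-- The complex singularity exponent of a function `f : ℂ → ℂ` at a point `p`:
the supremum of the `γ ≥ 0` such that `|f|^{-2γ}` is integrable on some disc
around `p`. -/
noncomputable def cse (f : ℂ → ℂ) (p : ℂ) : ℝ :=
  sSup {γ : ℝ | 0 ≤ γ ∧ ∃ r : ℝ, 0 < r ∧
    (∫⁻ z in Metric.ball p r, ENNReal.ofReal (‖f z‖ ^ (-(2 * γ)))) < ⊤}

/-!
On the hyperbola `xy = s²` the substitution `y = s²/x` turns `F` into
`s^(4n+2) P(x/s) / x^(2n+1)`, and `‖xy‖^((2n+1)/2)` becomes the polynomial term `s^(2n+1)`.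
The factor `(z - 1)^(2n+2)` of `P` therefore gives `|f_t(x)| ≤ K |x - s|^(2n+2)` near `s`, while
`f_t` vanishes only on a finite set. Since `|x - s|^(-β)` is not integrable near `s` in the plane
for `β ≥ 2`, every admissible `γ` satisfies `2γ(2n+2) < 2`. On the axes `F` is the monomial
`a z^(2n+1)` with `a` the top (resp. constant) coefficient of `q`, i.e. of `P`, whose exponent
is exactly `1/(2n+1)`.
-/

open Metric Set Module

section RadialIntegral

variable {E : Type*} [NormedAddCommGroup E] [NormedSpace ℝ E] [FiniteDimensional ℝ E]
  [MeasurableSpace E] [BorelSpace E] (μ : Measure E) [μ.IsAddHaarMeasure]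

theorem lintegral_ball_zero_norm_rpow_neg_lt_top_iff [Nontrivial E] {r : ℝ} (hr : 0 < r)
    (β : ℝ) :
    ∫⁻ x in ball (0 : E) r, ENNReal.ofReal (‖x‖ ^ (-β)) ∂μ < ⊤ ↔
      β < finrank ℝ E := by
  have hmeas : AEStronglyMeasurable (fun x : E => ‖x‖ ^ (-β)) (μ.restrict (ball 0 r)) :=
    (measurable_norm.pow_const _).aestronglyMeasurable
  rw [← hasFiniteIntegral_iff_ofReal (.of_forall fun x => by positivity),
    ← show Integrable _ _ ↔ _ from and_iff_right hmeas, ← IntegrableOn,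
    integrableOn_fun_norm_addHaar μ (f := fun y => y ^ (-β)),
    integrableOn_congr_fun (g := fun y : ℝ => y ^ ((finrank ℝ E : ℝ) - 1 - β)) _
      measurableSet_Ioo,
    intervalIntegral.integrableOn_Ioo_rpow_iff hr]
  · constructor <;> intro h <;> linarith
  · rintro y ⟨hy, -⟩
    have hd : ((finrank ℝ E - 1 : ℕ) : ℝ) = finrank ℝ E - 1 := by
      rw [Nat.cast_sub finrank_pos, Nat.cast_one]
    simp only [smul_eq_mul]
    rw [← Real.rpow_natCast, hd, ← Real.rpow_add hy, sub_eq_add_neg _ β]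

theorem lintegral_ball_norm_sub_rpow_neg_lt_top_iff [Nontrivial E] (p : E) {r : ℝ} (hr : 0 < r)
    (β : ℝ) :
    ∫⁻ x in ball p r, ENNReal.ofReal (‖x - p‖ ^ (-β)) ∂μ < ⊤ ↔
      β < finrank ℝ E := by
  rw [← (measurePreserving_add_right μ p).setLIntegral_comp_preimage_emb
    (measurableEmbedding_addRight p), preimage_add_right_ball, sub_self]
  simpa only [add_sub_cancel_right] using lintegral_ball_zero_norm_rpow_neg_lt_top_iff μ hr β

theorem ENNReal.mul_lt_top_iff_right {a b : ℝ≥0∞} (ha₀ : a ≠ 0) (ha : a ≠ ⊤) :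
    a * b < ⊤ ↔ b < ⊤ := by
  simp [lt_top_iff_ne_top, ENNReal.mul_eq_top, ha₀, ha]

theorem cse_const_mul_sub_pow {a : ℂ} (ha : a ≠ 0) {m : ℕ} (hm : 0 < m) (p : ℂ) :
    cse (fun z => a * (z - p) ^ m) p = 1 / m := by
  have hm' : (0 : ℝ) < m := Nat.cast_pos.2 hm
  have key : ∀ γ r : ℝ, 0 < r → ((∫⁻ z in ball p r,
      ENNReal.ofReal (‖a * (z - p) ^ m‖ ^ (-(2 * γ)))) < ⊤ ↔ γ < 1 / m) := by
    intro γ r hr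
    have hsplit : ∀ z : ℂ, ENNReal.ofReal (‖a * (z - p) ^ m‖ ^ (-(2 * γ))) =
        ENNReal.ofReal (‖a‖ ^ (-(2 * γ))) *
          ENNReal.ofReal (‖z - p‖ ^ (-(m * (2 * γ)))) := by
      intro z
      rw [← ENNReal.ofReal_mul (by positivity), norm_mul, norm_pow,
        Real.mul_rpow (norm_nonneg a) (by positivity), ← Real.rpow_natCast,
        ← Real.rpow_mul (norm_nonneg _), mul_neg]
    simp_rw [hsplit]
    rw [lintegral_const_mul' _ _ ENNReal.ofReal_ne_top,
      ENNReal.mul_lt_top_iff_right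
        (ENNReal.ofReal_pos.2 (Real.rpow_pos_of_pos (norm_pos_iff.2 ha) _)).ne'
        ENNReal.ofReal_ne_top,
      lintegral_ball_norm_sub_rpow_neg_lt_top_iff volume p hr, Complex.finrank_real_complex,
      lt_div_iff₀ hm']
    constructor <;> intro h <;> push_cast at * <;> linarith
  have hset : {γ : ℝ | 0 ≤ γ ∧ ∃ r : ℝ, 0 < r ∧
      (∫⁻ z in ball p r, ENNReal.ofReal (‖a * (z - p) ^ m‖ ^ (-(2 * γ)))) < ⊤} =
      Ico (0 : ℝ) (1 / m) := by
    ext γ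
    exact ⟨fun ⟨h₀, r, hr, h⟩ => ⟨h₀, (key γ r hr).1 h⟩,
      fun ⟨h₀, h⟩ => ⟨h₀, 1, one_pos, (key γ 1 one_pos).2 h⟩⟩
  rw [cse, hset, csSup_Ico (by positivity)]

theorem cse_le_of_norm_le_mul_pow {f : ℂ → ℂ} {p : ℂ} {K ρ : ℝ} {m : ℕ} (hm : 0 < m)
    (hK : 0 < K) (hρ : 0 < ρ)
    -- `f z ≠ 0` is needed since `Real.rpow` sends `0 ^ (-x)` to `0`, not to `∞`.
    (hf : ∀ᵐ z, z ∈ ball p ρ → f z ≠ 0 ∧ ‖f z‖ ≤ K * ‖z - p‖ ^ m) :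
    cse f p ≤ 1 / m := by
  refine Real.sSup_le ?_ (by positivity)
  rintro γ ⟨hγ, r, hr, hfin⟩
  by_contra! hlt
  have hβ : ¬ (m * (2 * γ) < 2) := by
    rw [div_lt_iff₀ (by positivity)] at hlt
    linarith
  have hpt : ∀ᵐ z, z ∈ ball p (min r ρ) →
      ENNReal.ofReal (K ^ (-(2 * γ))) * ENNReal.ofReal (‖z - p‖ ^ (-(m * (2 * γ)))) ≤
        ENNReal.ofReal (‖f z‖ ^ (-(2 * γ))) := by
    filter_upwards [hf] with z hz hzball
    obtain ⟨hne, hle⟩ := hz (ball_subset_ball (min_le_right r ρ) hzball)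
    have hprod : K ^ (-(2 * γ)) * ‖z - p‖ ^ (-(m * (2 * γ))) =
        (K * ‖z - p‖ ^ m) ^ (-(2 * γ)) := by
      rw [Real.mul_rpow hK.le (by positivity), ← Real.rpow_natCast,
        ← Real.rpow_mul (norm_nonneg _), mul_neg]
    rw [← ENNReal.ofReal_mul (by positivity), hprod]
    exact ENNReal.ofReal_le_ofReal
      (Real.rpow_le_rpow_of_nonpos (norm_pos_iff.2 hne) hle (by linarith))
  refine hfin.ne (top_le_iff.1 ?_)
  calc ⊤ = ∫⁻ z in ball p (min r ρ),
        ENNReal.ofReal (K ^ (-(2 * γ))) * ENNReal.ofReal (‖z - p‖ ^ (-(m * (2 * γ)))) := by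
        rw [lintegral_const_mul' _ _ ENNReal.ofReal_ne_top, eq_comm, ENNReal.mul_eq_top]
        refine .inl ⟨(ENNReal.ofReal_pos.2 (Real.rpow_pos_of_pos hK _)).ne', ?_⟩
        rw [← not_lt_top_iff, lintegral_ball_norm_sub_rpow_neg_lt_top_iff volume p
          (lt_min hr hρ), Complex.finrank_real_complex]
        exact_mod_cast hβ
    _ ≤ ∫⁻ z in ball p (min r ρ), ENNReal.ofReal (‖f z‖ ^ (-(2 * γ))) :=
        setLIntegral_mono_ae' measurableSet_ball hpt
    _ ≤ ∫⁻ z in ball p r, ENNReal.ofReal (‖f z‖ ^ (-(2 * γ))) :=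
        lintegral_mono_set (ball_subset_ball (min_le_left r ρ))

theorem Polynomial.exists_norm_eval_le_mul_pow_of_dvd {𝕜 : Type*} [NormedField 𝕜]
    [ProperSpace 𝕜] {P : 𝕜[X]} {a : 𝕜} {m : ℕ} (h : (X - C a) ^ m ∣ P) (R : ℝ) :
    ∃ M, 0 < M ∧ ∀ w ∈ closedBall a R, ‖P.eval w‖ ≤ M * ‖w - a‖ ^ m := by
  obtain ⟨Q, rfl⟩ := h
  obtain ⟨M, hM⟩ := (isCompact_closedBall a R).exists_bound_of_continuousOn Q.continuousOn
  refine ⟨max M 1, by positivity, fun w hw => ?_⟩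
  rw [eval_mul, eval_pow, eval_sub, eval_X, eval_C, norm_mul, norm_pow, mul_comm]
  exact mul_le_mul_of_nonneg_right ((hM w hw).trans (le_max_left M 1)) (by positivity)

noncomputable def counterexamplePoly (n : ℕ) (q : ℂ[X]) (c : ℂ) : ℂ[X] :=
  q.comp (X ^ 2) + C c * X ^ (2 * n + 1)

section CounterexamplePoly

variable {n : ℕ} {q : ℂ[X]} {c : ℂ}

theorem eval_counterexamplePoly (hq : q.natDegree ≤ 2 * n + 1) (w : ℂ) :
    (counterexamplePoly n q c).eval w =
      ∑ j ∈ Finset.range (2 * n + 2), q.coeff j * w ^ (2 * j) + c * w ^ (2 * n + 1) := by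
  rw [counterexamplePoly, eval_add, eval_comp,
    eval_eq_sum_range' (by omega : q.natDegree < 2 * n + 2)]
  simp [pow_mul]

theorem coeff_counterexamplePoly_zero : (counterexamplePoly n q c).coeff 0 = q.coeff 0 := by
  simpa [counterexamplePoly, ← expand_eq_comp_X_pow, coeff_X_pow] using
    coeff_expand_mul' two_pos q 0

theorem coeff_counterexamplePoly_top :
    (counterexamplePoly n q c).coeff (4 * n + 2) = q.coeff (2 * n + 1) := by
  rw [counterexamplePoly, coeff_add, ← expand_eq_comp_X_pow, coeff_C_mul_X_pow,
    show 4 * n + 2 = 2 * (2 * n + 1) by ring, coeff_expand_mul' two_pos, if_neg (by omega),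
    add_zero]

end CounterexamplePoly

theorem Real.sq_rpow_natCast_div_two {s : ℝ} (hs : 0 ≤ s) (k : ℕ) :
    (s ^ 2) ^ ((k : ℝ) / 2) = s ^ k := by
  rw [← Real.rpow_natCast s 2, ← Real.rpow_mul hs, Nat.cast_ofNat,
    mul_div_cancel₀ _ two_ne_zero, Real.rpow_natCast]

def IsCounterexampleFamily (n : ℕ) (q : ℂ[X]) (c : ℂ) (F : ℂ → ℂ → ℂ) : Prop :=
  ∀ x y : ℂ,
    F x y = (∑ j ∈ Finset.range (2 * n + 2), q.coeff j * x ^ j * y ^ (2 * n + 1 - j))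
      + c * ((‖x * y‖ ^ ((2 * (n : ℝ) + 1) / 2) : ℝ) : ℂ)

namespace IsCounterexampleFamily

variable {n : ℕ} {q : ℂ[X]} {c : ℂ} {F : ℂ → ℂ → ℂ}

theorem apply_zero_right (hF : IsCounterexampleFamily n q c F) (x : ℂ) :
    F x 0 = q.coeff (2 * n + 1) * x ^ (2 * n + 1) := by
  rw [hF x 0, Finset.sum_eq_single_of_mem (2 * n + 1) (by simp)]
  · simp [Real.zero_rpow (by positivity : (2 * (n : ℝ) + 1) / 2 ≠ 0)]
  · intro j hj hne
    rw [Finset.mem_range] at hj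
    simp [zero_pow (by omega : 2 * n + 1 - j ≠ 0)]

theorem apply_zero_left (hF : IsCounterexampleFamily n q c F) (y : ℂ) :
    F 0 y = q.coeff 0 * y ^ (2 * n + 1) := by
  rw [hF 0 y, Finset.sum_eq_single_of_mem 0 (by simp)]
  · simp [Real.zero_rpow (by positivity : (2 * (n : ℝ) + 1) / 2 ≠ 0)]
  · intro j _ hne
    simp [zero_pow hne]

theorem apply_div_eq (hF : IsCounterexampleFamily n q c F) (hq : q.natDegree ≤ 2 * n + 1)
    {s : ℝ} (hs : 0 < s) {x : ℂ} (hx : x ≠ 0) :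
    F x ((s : ℂ) ^ 2 / x) =
      (s : ℂ) ^ (4 * n + 2) * (counterexamplePoly n q c).eval (x / s) / x ^ (2 * n + 1) := by
  have hs0 : (s : ℂ) ≠ 0 := Complex.ofReal_ne_zero.2 hs.ne'
  have hnorm : ‖x * ((s : ℂ) ^ 2 / x)‖ = s ^ 2 := by
    rw [mul_div_cancel₀ _ hx, norm_pow, Complex.norm_real, Real.norm_of_nonneg hs.le]
  rw [eq_div_iff (pow_ne_zero _ hx), hF x, eval_counterexamplePoly hq, hnorm,
    show 2 * (n : ℝ) + 1 = ((2 * n + 1 : ℕ) : ℝ) by push_cast; ring,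
    Real.sq_rpow_natCast_div_two hs.le, add_mul, mul_add, Finset.sum_mul, Finset.mul_sum]
  congr 1
  · refine Finset.sum_congr rfl fun j hj => ?_
    obtain ⟨k, hk⟩ : ∃ k, 2 * n + 1 = j + k :=
      ⟨2 * n + 1 - j, by have := Finset.mem_range.1 hj; omega⟩
    rw [hk, Nat.add_sub_cancel_left, show 4 * n + 2 = 2 * (j + k) by omega, div_pow, div_pow]
    field_simp
    ring
  · rw [div_pow]
    push_cast
    field_simp
    ring

theorem eq_zero_or_isRoot_of_apply_div_eq_zero (hF : IsCounterexampleFamily n q c F)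
    (hq : q.natDegree ≤ 2 * n + 1) {s : ℝ} (hs : 0 < s)
    {x : ℂ} (hx : F x ((s : ℂ) ^ 2 / x) = 0) :
    x = 0 ∨ (counterexamplePoly n q c).IsRoot (x / s) := by
  refine or_iff_not_imp_left.2 fun hx0 => ?_
  rw [apply_div_eq hF hq hs hx0] at hx
  simpa [IsRoot, hs.ne', hx0] using hx

theorem ae_apply_div_ne_zero (hF : IsCounterexampleFamily n q c F) (hq : q.natDegree ≤ 2 * n + 1)
    (hP : counterexamplePoly n q c ≠ 0) {s : ℝ} (hs : 0 < s) :
    ∀ᵐ x : ℂ, F x ((s : ℂ) ^ 2 / x) ≠ 0 := by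
  have hs0 : (s : ℂ) ≠ 0 := Complex.ofReal_ne_zero.2 hs.ne'
  have hfin : {x : ℂ | x = 0 ∨ (counterexamplePoly n q c).IsRoot (x / s)}.Finite :=
    (finite_singleton 0).union <| ((finite_setOfPred_isRoot hP).image (· * (s : ℂ))).subset
      fun x hx => ⟨x / s, hx, div_mul_cancel₀ x hs0⟩
  filter_upwards [hfin.countable.ae_notMem volume] with x hx hFx
  exact hx (eq_zero_or_isRoot_of_apply_div_eq_zero hF hq hs hFx)

theorem norm_apply_div_le (hF : IsCounterexampleFamily n q c F) (hq : q.natDegree ≤ 2 * n + 1)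
    (hdvd : (X - C 1) ^ (2 * n + 2) ∣ counterexamplePoly n q c) {s : ℝ} (hs : 0 < s) :
    ∃ K, 0 < K ∧ ∀ x ∈ ball (s : ℂ) (s / 2),
      ‖F x ((s : ℂ) ^ 2 / x)‖ ≤ K * ‖x - s‖ ^ (2 * n + 2) := by
  obtain ⟨M, hM, hPM⟩ := exists_norm_eval_le_mul_pow_of_dvd hdvd (1 / 2)
  refine ⟨s ^ (4 * n + 2) * M / (s ^ (2 * n + 2) * (s / 2) ^ (2 * n + 1)), by positivity,
    fun x hx => ?_⟩
  rw [mem_ball, dist_eq_norm] at hx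
  have hxs : ‖x / s - 1‖ = ‖x - s‖ / s := by
    rw [div_sub_one (Complex.ofReal_ne_zero.2 hs.ne'), norm_div, Complex.norm_real,
      Real.norm_of_nonneg hs.le]
  have hx_lower : s / 2 ≤ ‖x‖ := by
    have := norm_sub_norm_le (s : ℂ) x
    rw [Complex.norm_real, Real.norm_of_nonneg hs.le, norm_sub_rev] at this
    linarith
  have hx0 : x ≠ 0 := norm_pos_iff.1 (by linarith)
  have hw : x / s ∈ closedBall (1 : ℂ) (1 / 2) := by
    rw [mem_closedBall, dist_eq_norm, hxs, div_le_iff₀ hs]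
    linarith
  calc ‖F x ((s : ℂ) ^ 2 / x)‖
        = s ^ (4 * n + 2) * ‖(counterexamplePoly n q c).eval (x / s)‖ /
          ‖x‖ ^ (2 * n + 1) := by
        rw [apply_div_eq hF hq hs hx0, norm_div, norm_mul, norm_pow, norm_pow, Complex.norm_real,
          Real.norm_of_nonneg hs.le]
    _ ≤ s ^ (4 * n + 2) * (M * ‖x / s - 1‖ ^ (2 * n + 2)) / (s / 2) ^ (2 * n + 1) := by
        gcongr
        exact hPM _ hw
    _ = _ := by
        rw [hxs, div_pow]
        field_simp

end IsCounterexampleFamily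

/-- The counterexample family: if `P(z) = q(z²) + c·z^{2n+1}` is divisible by
`(z-1)^{2n+2}` and has nonzero constant and `z^{4n+2}`-coefficients, then for
`F(x,y) = Σ_j (coeff of z^j in q)·x^j·y^{2n+1-j} + c·|xy|^{(2n+1)/2}` and every
`s > 0`, `t = s²`, the complex singularity exponent of `f_t = F|_{X_t}` at
`(s, s)` is at most `1/(2n+2) < 1/(2n+1)`, while that of `f₀ = F|_{X₀}` at the
origin equals `1/(2n+1)`. -/
theorem cse_counterexample_family (n : ℕ) (q : ℂ[X]) (hq : q.natDegree ≤ 2 * n + 1)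
    (c : ℂ)
    (hdvd : (X - C 1) ^ (2 * n + 2) ∣ (q.comp (X ^ 2) + C c * X ^ (2 * n + 1)))
    (hcoeff0 : (q.comp (X ^ 2) + C c * X ^ (2 * n + 1)).coeff 0 ≠ 0)
    (hcoefftop : (q.comp (X ^ 2) + C c * X ^ (2 * n + 1)).coeff (4 * n + 2) ≠ 0)
    (F : ℂ → ℂ → ℂ)
    (hF : ∀ x y : ℂ,
      F x y = (∑ j ∈ Finset.range (2 * n + 2), q.coeff j * x ^ j * y ^ (2 * n + 1 - j))
        + c * ((‖x * y‖ ^ ((2 * (n : ℝ) + 1) / 2) : ℝ) : ℂ)) :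
    ∀ s : ℝ, 0 < s →
      cse (fun x : ℂ => F x ((s : ℂ) ^ 2 / x)) (s : ℂ) ≤ 1 / (2 * (n : ℝ) + 2) ∧
      1 / (2 * (n : ℝ) + 2) < 1 / (2 * (n : ℝ) + 1) ∧
      min (cse (fun x : ℂ => F x 0) 0) (cse (fun y : ℂ => F 0 y) 0)
        = 1 / (2 * (n : ℝ) + 1) := by
  intro s hs
  replace hF : IsCounterexampleFamily n q c F := hF
  have hP : counterexamplePoly n q c ≠ 0 := fun h =>
    hcoeff0 ((congrArg (coeff · 0) h).trans (coeff_zero 0))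
  obtain ⟨K, hK, hbound⟩ := hF.norm_apply_div_le hq hdvd hs
  have hfiber := cse_le_of_norm_le_mul_pow (m := 2 * n + 2) (by omega) hK (half_pos hs)
    (by filter_upwards [hF.ae_apply_div_ne_zero hq hP hs] with x hx hxb
          using ⟨hx, hbound x hxb⟩)
  have haxis : ∀ a : ℂ, a ≠ 0 →
      cse (fun z => a * z ^ (2 * n + 1)) 0 = 1 / (2 * (n : ℝ) + 1) := by
    intro a ha
    simpa using cse_const_mul_sub_pow ha (m := 2 * n + 1) (by omega) 0
  refine ⟨by exact_mod_cast hfiber, one_div_lt_one_div_of_lt (by positivity) (by linarith), ?_⟩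
  rw [funext hF.apply_zero_right, funext hF.apply_zero_left, haxis _ ?_, haxis _ ?_, min_self]
  · rwa [← coeff_counterexamplePoly_zero]
  · rwa [← coeff_counterexamplePoly_top]
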